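/- arXiv:1312.7493 — 2 statements merged into one kernel-verified Lean document; each statement's English description precedes it below -/
import Mathlib

section
/- Let C be a triangulated category endowed with a weight structure w, let i ∈ ℤ, and let f : M → M' be a morphism in C. Suppose given distinguished triangles B → M → A → B[1] and B' → M' → A' → B'[1] with B, B' ∈ C_{w≤i} and A, A' ∈ C_{w≥i+1}, and an isomorphism g : B → B' such that the square formed by g, f and the morphisms B → M, B' → M' commutes. Then any cone of f belongs to C_{w≥i+1}. -/
open CategoryTheory CategoryTheory.Limits CategoryTheory.Pretriangulated CategoryTheory.Category
open scoped ZeroObject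

universe w v u

/-- `X` is a retract of `Y`: the identity of `X` factors through `Y`. -/
def IsRetract {D : Type*} [Category D] (X Y : D) : Prop :=
  ∃ (i : X ⟶ Y) (r : Y ⟶ X), i ≫ r = 𝟙 X

/-- A weight structure on a triangulated category `C`. -/
structure WeightStructure (C : Type u) [Category.{v} C] [Preadditive C] [HasZeroObject C]
    [HasShift C ℤ] [∀ n : ℤ, (shiftFunctor C n).Additive] [Pretriangulated C] where
  /-- the class `C_{w≤0}` -/
  LE : Set C
  /-- the class `C_{w≥0}` -/
  GE : Set C
  le_retract : ∀ ⦃X Y : C⦄, IsRetract X Y → Y ∈ LE → X ∈ LE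
  ge_retract : ∀ ⦃X Y : C⦄, IsRetract X Y → Y ∈ GE → X ∈ GE
  le_shift : ∀ X : C, X ∈ LE → X⟦(-1 : ℤ)⟧ ∈ LE
  ge_shift : ∀ X : C, X ∈ GE → X⟦(1 : ℤ)⟧ ∈ GE
  orthogonal : ∀ ⦃X Y : C⦄, X ∈ LE → Y ∈ GE → ∀ f : X ⟶ Y⟦(1 : ℤ)⟧, f = 0
  exists_decomp : ∀ M : C, ∃ (B A : C) (f : B ⟶ M) (g : M ⟶ A) (h : A ⟶ B⟦(1 : ℤ)⟧),
    B ∈ LE ∧ A⟦(-1 : ℤ)⟧ ∈ GE ∧ Triangle.mk f g h ∈ distTriang C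

namespace WeightStructure

variable {C : Type u} [Category.{v} C] [Preadditive C] [HasZeroObject C]
  [HasShift C ℤ] [∀ n : ℤ, (shiftFunctor C n).Additive] [Pretriangulated C]

/-- the class `C_{w≤i} = C_{w≤0}[i]` -/
def leSet (w : WeightStructure C) (i : ℤ) : Set C := {X : C | X⟦-i⟧ ∈ w.LE}

/-- the class `C_{w≥i} = C_{w≥0}[i]` -/
def geSet (w : WeightStructure C) (i : ℤ) : Set C := {X : C | X⟦-i⟧ ∈ w.GE}

/-- the class `C_{w=i} = C_{w≤i} ∩ C_{w≥i}` -/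
def eqSet (w : WeightStructure C) (i : ℤ) : Set C := w.leSet i ∩ w.geSet i

end WeightStructure

variable {C : Type u} [Category.{v} C] [Preadditive C] [HasZeroObject C]
  [HasShift C ℤ] [∀ n : ℤ, (shiftFunctor C n).Additive] [Pretriangulated C]

/-! For `X ∈ C_{w≤i}`, the orthogonality `Hom(X, C_{w≥i+1}) = 0` applied to `A` and `A'` shows
that `Hom(X, -)` sends `b'` and `b[1]` to surjections and `b'[1]` to an injection. Feeding this into
the exact sequence `Hom(X, M') → Hom(X, Z) → Hom(X, M[1]) → Hom(X, M'[1])` of the cone triangle,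
together with `b[1] ≫ f[1] = g[1] ≫ b'[1]` and `b' ≫ u = 0`, gives `Hom(X, Z) = 0`. Conversely,
an object `Z` with `Hom(C_{w≤i}, Z) = 0` lies in `C_{w≥i+1}`: the first map of a weight
decomposition of `Z` vanishes, so `Z` is a retract of its `C_{w≥i+1}` part. -/

lemma CategoryTheory.Retract.isRetract {D : Type*} [Category D] {X Y : D} (h : Retract X Y) :
    IsRetract X Y :=
  ⟨h.i, h.r, h.retract⟩

namespace WeightStructure

variable (w : WeightStructure C)

lemma mem_geSet_of_retract {n : ℤ} {X Y : C} (h : Retract X Y) (hY : Y ∈ w.geSet n) :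
    X ∈ w.geSet n :=
  w.ge_retract (h.map (shiftFunctor C (-n))).isRetract hY

lemma shift_mem_leSet {X : C} (hX : X ∈ w.LE) (n : ℤ) : X⟦n⟧ ∈ w.leSet n :=
  w.le_retract ((shiftFunctorCompIsoId C n (-n) (by omega)).app X).retract.isRetract hX

lemma shift_one_mem_geSet {n : ℤ} {X : C} (hX : X ∈ w.geSet n) : X⟦(1 : ℤ)⟧ ∈ w.geSet n :=
  w.ge_retract ((shiftFunctorComm C 1 (-n)).app X).retract.isRetract (w.ge_shift _ hX)

lemma hom_eq_zero_of_mem_leSet_of_mem_geSet {n : ℤ} {X Y : C} (hX : X ∈ w.leSet n)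
    (hY : Y ∈ w.geSet (n + 1)) (f : X ⟶ Y) : f = 0 := by
  let e : Y⟦-n⟧ ≅ (Y⟦-(n + 1)⟧)⟦(1 : ℤ)⟧ := (shiftFunctorAdd' C (-(n + 1)) 1 (-n) (by omega)).app Y
  have h : f⟦-n⟧' ≫ e.hom = 0 := w.orthogonal hX hY _
  apply (shiftFunctor C (-n)).map_injective
  rw [Functor.map_zero, ← cancel_mono e.hom, h, zero_comp]

section Triangle

variable {T : Triangle C} (hT : T ∈ distTriang C) {n : ℤ} (h₃ : T.obj₃ ∈ w.geSet (n + 1))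
  {X : C} (hX : X ∈ w.leSet n)
include hT h₃ hX

lemma exists_eq_comp_mor₁ (φ : X ⟶ T.obj₂) : ∃ ψ : X ⟶ T.obj₁, φ = ψ ≫ T.mor₁ :=
  Triangle.coyoneda_exact₂ T hT φ (w.hom_eq_zero_of_mem_leSet_of_mem_geSet hX h₃ _)

lemma eq_zero_of_comp_shift_map_mor₁_eq_zero (χ : X ⟶ T.obj₁⟦(1 : ℤ)⟧)
    (hχ : χ ≫ T.mor₁⟦(1 : ℤ)⟧' = 0) : χ = 0 := by
  obtain ⟨ξ, rfl⟩ := Triangle.coyoneda_exact₁ T hT χ hχ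
  rw [w.hom_eq_zero_of_mem_leSet_of_mem_geSet hX h₃ ξ, zero_comp]

end Triangle

lemma mem_geSet_add_one_of_forall_hom_eq_zero {n : ℤ} {Z : C}
    (hZ : ∀ X ∈ w.leSet n, ∀ φ : X ⟶ Z, φ = 0) : Z ∈ w.geSet (n + 1) := by
  obtain ⟨B, A, f, g, h, hB, hA, hT⟩ := w.exists_decomp (Z⟦-n⟧)
  have hf : f = 0 := by
    let e : (Z⟦-n⟧)⟦n⟧ ≅ Z := (shiftFunctorCompIsoId C (-n) n (by omega)).app Z
    apply (shiftFunctor C n).map_injective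
    rw [Functor.map_zero, ← cancel_mono e.hom, zero_comp]
    exact hZ _ (w.shift_mem_leSet hB n) _
  obtain ⟨r, hr⟩ := Triangle.yoneda_exact₂ _ hT (𝟙 _) <| by
    rw [Triangle.mk_mor₁, hf]; exact zero_comp
  let hZA : Retract (Z⟦-n⟧) A := ⟨g, r, hr.symm⟩
  let e : Z⟦-(n + 1)⟧ ≅ (Z⟦-n⟧)⟦(-1 : ℤ)⟧ := (shiftFunctorAdd' C (-n) (-1) _ (by omega)).app Z
  exact w.ge_retract (e.retract.trans (hZA.map _)).isRetract hA

end WeightStructure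

theorem cone_in_geSet_of_compatible_iso_general (w : WeightStructure C) (i : ℤ)
    {M M' : C} (f : M ⟶ M')
    (B A B' A' : C) (b : B ⟶ M) (a : M ⟶ A) (d : A ⟶ B⟦(1 : ℤ)⟧)
    (b' : B' ⟶ M') (a' : M' ⟶ A') (d' : A' ⟶ B'⟦(1 : ℤ)⟧)
    (hT : Triangle.mk b a d ∈ (distTriang C))
    (hT' : Triangle.mk b' a' d' ∈ (distTriang C))
    (hA : A ∈ w.geSet (i + 1)) (hA' : A' ∈ w.geSet (i + 1))
    (g : B ≅ B') (hg : g.hom ≫ b' = b ≫ f) :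
    ∀ (Z : C) (u : M' ⟶ Z) (v : Z ⟶ M⟦(1 : ℤ)⟧),
      Triangle.mk f u v ∈ (distTriang C) → Z ∈ w.geSet (i + 1) := by
  intro Z u v hTZ
  refine w.mem_geSet_add_one_of_forall_hom_eq_zero fun X hX φ => ?_
  have hφv : φ ≫ v = 0 := by
    obtain ⟨χ, hχ⟩ : ∃ χ : X ⟶ B⟦(1 : ℤ)⟧, φ ≫ v = χ ≫ (-b⟦(1 : ℤ)⟧') :=
      w.exists_eq_comp_mor₁ (rot_of_distTriang _ (rot_of_distTriang _ (rot_of_distTriang _ hT)))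
        (w.shift_one_mem_geSet hA) hX (φ ≫ v)
    have hχb : χ ≫ b⟦(1 : ℤ)⟧' = -(φ ≫ v) := by
      rw [hχ, Preadditive.comp_neg, neg_neg]
    have hvf : v ≫ f⟦(1 : ℤ)⟧' = 0 := comp_distTriang_mor_zero₃₁ _ hTZ
    have hχg : χ ≫ g.hom⟦(1 : ℤ)⟧' = 0 := by
      refine w.eq_zero_of_comp_shift_map_mor₁_eq_zero hT' hA' hX _
        (?_ : (χ ≫ g.hom⟦(1 : ℤ)⟧') ≫ b'⟦(1 : ℤ)⟧' = 0)
      rw [assoc, ← Functor.map_comp, hg, Functor.map_comp, ← assoc, hχb,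
        Preadditive.neg_comp, assoc, hvf, comp_zero, neg_zero]
    have hχ0 : χ = 0 := (cancel_mono (g.hom⟦(1 : ℤ)⟧')).1 (hχg.trans zero_comp.symm)
    rw [hχ, hχ0, zero_comp]
  obtain ⟨η, rfl⟩ : ∃ η : X ⟶ M', φ = η ≫ u := Triangle.coyoneda_exact₃ _ hTZ φ hφv
  obtain ⟨θ, rfl⟩ : ∃ θ : X ⟶ B', η = θ ≫ b' := w.exists_eq_comp_mor₁ hT' hA' hX η
  have hfu : f ≫ u = 0 := comp_distTriang_mor_zero₁₂ _ hTZ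
  have hb'u : b' ≫ u = 0 := by
    rw [← cancel_epi g.hom, reassoc_of% hg, hfu, comp_zero, comp_zero]
  rw [assoc, hb'u, comp_zero]

/-- Proposition 2.1.3(16): if `f : M ⟶ M'` is compatible with an isomorphism
`w_{≤i}M ⟶ w_{≤i}M'` of (choices of) weight truncations, then any cone of `f`
belongs to `C_{w≥i+1}`. -/
theorem cone_in_geSet_of_compatible_iso (w : WeightStructure C) (i : ℤ)
    {M M' : C} (f : M ⟶ M')
    (B A B' A' : C) (b : B ⟶ M) (a : M ⟶ A) (d : A ⟶ B⟦(1 : ℤ)⟧)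
    (b' : B' ⟶ M') (a' : M' ⟶ A') (d' : A' ⟶ B'⟦(1 : ℤ)⟧)
    (hT : Triangle.mk b a d ∈ (distTriang C))
    (hT' : Triangle.mk b' a' d' ∈ (distTriang C))
    (hB : B ∈ w.leSet i) (hB' : B' ∈ w.leSet i)
    (hA : A ∈ w.geSet (i + 1)) (hA' : A' ∈ w.geSet (i + 1))
    (g : B ≅ B') (hg : g.hom ≫ b' = b ≫ f) :
    ∀ (Z : C) (u : M' ⟶ Z) (v : Z ⟶ M⟦(1 : ℤ)⟧),
      Triangle.mk f u v ∈ (distTriang C) → Z ∈ w.geSet (i + 1) :=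
  cone_in_geSet_of_compatible_iso_general w i f B A B' A' b a d b' a' d' hT hT' hA hA' g hg
end

section
/- Let C be a triangulated category endowed with a weight structure w, and let M be a bounded object, i.e., M ∈ C^b := (∪_{i∈ℤ} C_{w≤i}) ∩ (∪_{i∈ℤ} C_{w≥i}). Then for any i ∈ ℤ, M belongs to C_{w≥i} if and only if Hom(X, M) = 0 for every j < i and every X ∈ C_{w=j}. -/
open CategoryTheory CategoryTheory.Limits CategoryTheory.Pretriangulated CategoryTheory.Category
open scoped ZeroObject

universe w v u

variable {C : Type u} [Category.{v} C] [Preadditive C] [HasZeroObject C]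
  [HasShift C ℤ] [∀ n : ℤ, (shiftFunctor C n).Additive] [Pretriangulated C]

/-! Maps from `C_{w=j}`, `j < i`, into `C_{w≥i}` vanish by orthogonality. Conversely, let
`M ∈ C_{w≥k}` with `k < i` and take a weight decomposition `B → M → A → B[1]` with
`B ∈ C_{w≤k}` and `A ∈ C_{w≥k+1}`. Rotating, `B` is an extension of `M` by `A[-1]`, both in
`C_{w≥k}`, so `B ∈ C_{w=k}`; hence `B → M` vanishes and `M` is a retract of `A ∈ C_{w≥k+1}`.
Starting from a lower weight bound of `M`, this climbs up to `C_{w≥i}`. -/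

namespace CategoryTheory.Pretriangulated

variable {C : Type*} [Category C] [Preadditive C] [HasZeroObject C] [HasShift C ℤ]
  [∀ n : ℤ, (shiftFunctor C n).Additive] [Pretriangulated C] {T : Triangle C}

lemma isRetract_obj₂_obj₃_of_mor₁_eq_zero (hT : T ∈ distTriang C) (h : T.mor₁ = 0) :
    IsRetract T.obj₂ T.obj₃ := by
  obtain ⟨r, hr⟩ := Triangle.yoneda_exact₂ T hT (𝟙 T.obj₂) (by rw [h, zero_comp])
  exact ⟨T.mor₂, r, hr.symm⟩

lemma distinguished_of_iso_obj₂ (hT : T ∈ distTriang C) {X : C} (e : T.obj₂ ≅ X) :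
    Triangle.mk (T.mor₁ ≫ e.hom) (e.inv ≫ T.mor₂) T.mor₃ ∈ distTriang C := by
  refine isomorphic_distinguished _ hT _
    (Triangle.isoMk _ _ (Iso.refl _) e.symm (Iso.refl _) ?_ ?_ ?_)
  -- `simp` gets stuck here: the objects of `Triangle.mk` only unfold at default transparency
  · exact ((assoc _ _ _).trans ((congrArg (T.mor₁ ≫ ·) e.hom_inv_id).trans (comp_id _))).trans
      (id_comp _).symm
  · exact comp_id _
  · exact (congrArg _ (Functor.map_id _ _)).trans ((comp_id _).trans (id_comp _).symm)

end CategoryTheory.Pretriangulated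

namespace WeightStructure

variable (w : WeightStructure C)

lemma mem_LE_of_iso {X Y : C} (e : X ≅ Y) (hY : Y ∈ w.LE) : X ∈ w.LE :=
  w.le_retract ⟨e.hom, e.inv, e.hom_inv_id⟩ hY

lemma mem_GE_of_iso {X Y : C} (e : X ≅ Y) (hY : Y ∈ w.GE) : X ∈ w.GE :=
  w.ge_retract ⟨e.hom, e.inv, e.hom_inv_id⟩ hY

lemma shift_mem_GE {X : C} (hX : X ∈ w.GE) {n : ℤ} (hn : 0 ≤ n) : X⟦n⟧ ∈ w.GE := by
  induction n, hn using Int.leInduction with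
  | base => exact w.mem_GE_of_iso ((shiftFunctorZero C ℤ).app X) hX
  | succ n _ ih =>
    exact w.mem_GE_of_iso ((shiftFunctorAdd' C n 1 (n + 1) rfl).app X) (w.ge_shift _ ih)

lemma geSet_antitone : Antitone w.geSet := fun j k hjk M hM =>
  w.mem_GE_of_iso ((shiftFunctorAdd' C (-k) (k - j) (-j) (by ring)).app M)
    (w.shift_mem_GE hM (by omega))

lemma mem_geSet_of_isRetract {X Y : C} {k : ℤ} (h : IsRetract X Y) (hY : Y ∈ w.geSet k) :
    X ∈ w.geSet k := by
  obtain ⟨i, r, hir⟩ := h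
  exact w.ge_retract ⟨(shiftFunctor C (-k)).map i, (shiftFunctor C (-k)).map r,
    by rw [← Functor.map_comp, hir, CategoryTheory.Functor.map_id]⟩ hY

lemma shift_neg_one_mem_geSet {A : C} {k : ℤ} (hA : A ∈ w.geSet (k + 1)) :
    A⟦(-1 : ℤ)⟧ ∈ w.geSet k :=
  w.mem_GE_of_iso ((shiftFunctorAdd' C (-1) (-k) (-(k + 1)) (by ring)).app A).symm hA

lemma hom_eq_zero_of_mem_leSet_of_mem_geSet_s13 {X M : C} {j k : ℤ} (hX : X ∈ w.leSet j)
    (hM : M ∈ w.geSet k) (hjk : j < k) (f : X ⟶ M) : f = 0 := by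
  apply (shiftFunctor C (-j)).map_injective
  rw [Functor.map_zero]
  have hY : M⟦-k⟧⟦k - j - 1⟧ ∈ w.GE := w.shift_mem_GE hM (by omega)
  let e : M⟦-j⟧ ≅ (M⟦-k⟧⟦k - j - 1⟧)⟦(1 : ℤ)⟧ :=
    (shiftFunctorAdd' C (-k) (k - j) (-j) (by ring)).app M ≪≫
      (shiftFunctorAdd' C (k - j - 1) 1 (k - j) (by ring)).app (M⟦-k⟧)
  rw [← cancel_mono e.hom, zero_comp]
  exact w.orthogonal hX hY _

lemma exists_distTriang_mem_leSet_mem_geSet (M : C) (m : ℤ) :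
    ∃ T ∈ distTriang C, T.obj₂ = M ∧ T.obj₁ ∈ w.leSet m ∧ T.obj₃ ∈ w.geSet (m + 1) := by
  obtain ⟨B, A, f, g, h, hB, hA, hT⟩ := w.exists_decomp (M⟦-m⟧)
  have hS := distinguished_of_iso_obj₂ (Triangle.shift_distinguished _ hT m)
    ((shiftFunctorCompIsoId C (-m) m (by ring)).app M)
  exact ⟨_, hS, rfl,
    w.mem_LE_of_iso ((shiftFunctorCompIsoId C m (-m) (by ring)).app B) hB,
    w.mem_GE_of_iso ((shiftFunctorAdd' C m (-(m + 1)) (-1) (by ring)).app A).symm hA⟩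

lemma mem_geSet_of_distTriang_of_mor₁_eq_zero {T : Triangle C} (hT : T ∈ distTriang C)
    {k : ℤ} (h₃ : T.obj₃ ∈ w.geSet k) (h : T.mor₁ = 0) : T.obj₂ ∈ w.geSet k :=
  w.mem_geSet_of_isRetract (isRetract_obj₂_obj₃_of_mor₁_eq_zero hT h) h₃

lemma mem_geSet_add_one_of_forall_leSet_hom_eq_zero {M : C} {k : ℤ}
    (h : ∀ X ∈ w.leSet k, ∀ f : X ⟶ M, f = 0) : M ∈ w.geSet (k + 1) := by
  obtain ⟨T, hT, rfl, h₁, h₃⟩ := w.exists_distTriang_mem_leSet_mem_geSet M k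
  exact w.mem_geSet_of_distTriang_of_mor₁_eq_zero hT h₃ (h _ h₁ _)

lemma mem_geSet_obj₂_of_distTriang {T : Triangle C} (hT : T ∈ distTriang C) {k : ℤ}
    (h₁ : T.obj₁ ∈ w.geSet k) (h₃ : T.obj₃ ∈ w.geSet k) : T.obj₂ ∈ w.geSet k := by
  obtain ⟨k, rfl⟩ : ∃ l, k = l + 1 := ⟨k - 1, by ring⟩
  refine w.mem_geSet_add_one_of_forall_leSet_hom_eq_zero fun X hX φ => ?_
  obtain ⟨ψ, rfl⟩ := Triangle.coyoneda_exact₂ T hT φ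
    (w.hom_eq_zero_of_mem_leSet_of_mem_geSet_s13 hX h₃ (by omega) _)
  rw [w.hom_eq_zero_of_mem_leSet_of_mem_geSet_s13 hX h₁ (by omega) ψ, zero_comp]

lemma mem_geSet_add_one_of_forall_eqSet_hom_eq_zero {M : C} {k : ℤ} (hM : M ∈ w.geSet k)
    (h : ∀ X ∈ w.eqSet k, ∀ f : X ⟶ M, f = 0) : M ∈ w.geSet (k + 1) := by
  obtain ⟨T, hT, rfl, h₁, h₃⟩ := w.exists_distTriang_mem_leSet_mem_geSet M k
  have h₁' : T.obj₁ ∈ w.geSet k :=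
    w.mem_geSet_obj₂_of_distTriang (inv_rot_of_distTriang _ hT)
      (w.shift_neg_one_mem_geSet h₃) hM
  exact w.mem_geSet_of_distTriang_of_mor₁_eq_zero hT h₃ (h _ ⟨h₁, h₁'⟩ _)

end WeightStructure

/-- Proposition 2.1.3(19): a bounded object `M` belongs to `C_{w≥i}` if and only if
`C_{w=j} ⊥ M` for all `j < i`. -/
theorem bounded_geSet_iff_orthogonal (w : WeightStructure C) (M : C)
    (hbdd : (∃ i : ℤ, M ∈ w.leSet i) ∧ (∃ i : ℤ, M ∈ w.geSet i)) (i : ℤ) :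
    M ∈ w.geSet i ↔ ∀ j : ℤ, j < i → ∀ X ∈ w.eqSet j, ∀ f : X ⟶ M, f = 0 := by
  refine ⟨fun hM j hj X hX f => w.hom_eq_zero_of_mem_leSet_of_mem_geSet_s13 hX.1 hM hj f,
    fun h => ?_⟩
  obtain ⟨m, hm⟩ := hbdd.2
  have climb : ∀ k, min m i ≤ k → k ≤ i → M ∈ w.geSet k := by
    intro k hk
    induction k, hk using Int.leInduction with
    | base => exact fun _ => w.geSet_antitone (min_le_left m i) hm
    | succ k _ ih => exact fun hki =>
        w.mem_geSet_add_one_of_forall_eqSet_hom_eq_zero (ih (by omega)) (h k (by omega))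
  exact climb i (min_le_right m i) le_rfl
end
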